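/- Let N ∈ ℕ, T ≥ 0, L ≥ 0, α₁,…,α_N ≥ 0, and let u¹,…,u^N : [0,T] → [0,∞) be continuous functions satisfying, for all i and all t ∈ [0,T], u^i(t) ≤ α_i + L ∫₀ᵗ ( u^i(r) + N^{−1} ∑_{k=1}^N u^k(r) ) dr. Then, with ᾱ := N^{−1} ∑_{k=1}^N α_k, for all i and all t ∈ [0,T]: u^i(t) ≤ e^{LT} ( α_i + L T e^{2LT} ᾱ ); in particular u^i(t) ≤ (1 + LT e^{2LT}) e^{LT} (α_i + ᾱ). -/

import Mathlib

/-!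
Averaging the `N` inequalities decouples them: the mean `m = N⁻¹ ∑ₖ uᵏ` satisfies the scalar
inequality `m(t) ≤ ᾱ + 2L ∫₀ᵗ m`, so Gronwall gives `m ≤ ᾱ e^{2LT}`. Feeding this bound back
into the `i`-th inequality leaves `uⁱ(t) ≤ αᵢ + LTe^{2LT} ᾱ + L ∫₀ᵗ uⁱ`, and a second application
of Gronwall concludes.
-/

open MeasureTheory Set Real Topology intervalIntegral

section Gronwall

variable {u : ℝ → ℝ} {a C T : ℝ}

theorem ContinuousOn.intervalIntegrable_of_mem_Icc (hu : ContinuousOn u (Icc a T)) {t : ℝ}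
    (ht : t ∈ Icc a T) : IntervalIntegrable u volume a t :=
  (hu.mono (Icc_subset_Icc_right ht.2)).intervalIntegrable_of_Icc ht.1

theorem ContinuousOn.hasDerivWithinAt_primitive_Ici (hu : ContinuousOn u (Icc a T)) {t : ℝ}
    (ht : t ∈ Ico a T) : HasDerivWithinAt (fun s => ∫ r in a..s, u r) (u t) (Ici t) t := by
  have hnhds : Icc a T ∈ 𝓝[>] t :=
    mem_nhdsWithin.2 ⟨Iio T, isOpen_Iio, ht.2, fun x hx => ⟨ht.1.trans hx.2.le, hx.1.le⟩⟩
  exact integral_hasDerivWithinAt_right (hu.intervalIntegrable_of_mem_Icc (Ico_subset_Icc_self ht))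
    ⟨Icc a T, hnhds, hu.aestronglyMeasurable measurableSet_Icc⟩
    ((hu.continuousWithinAt (Ico_subset_Icc_self ht)).mono_of_mem_nhdsWithin hnhds)

theorem ContinuousOn.continuousOn_primitive (hu : ContinuousOn u (Icc a T)) :
    ContinuousOn (fun s => ∫ r in a..s, u r) (Icc a T) :=
  (intervalIntegral.continuousOn_primitive hu.integrableOn_Icc).congr fun _ hs =>
    integral_of_le hs.1

theorem add_mul_gronwallBound_zero (C a t : ℝ) :
    a + C * gronwallBound 0 C a t = a * exp (C * t) := by
  rcases eq_or_ne C 0 with rfl | hC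
  · simp [gronwallBound_K0]
  · rw [gronwallBound_of_K_ne_0 hC]
    field_simp
    ring

theorem le_mul_exp_of_le_add_mul_integral (hC : 0 ≤ C) (hu : ContinuousOn u (Icc 0 T))
    (h : ∀ t ∈ Icc 0 T, u t ≤ a + C * ∫ r in (0 : ℝ)..t, u r) :
    ∀ t ∈ Icc 0 T, u t ≤ a * exp (C * t) := by
  set F : ℝ → ℝ := fun t => ∫ r in (0 : ℝ)..t, u r
  -- `F 0 = 0` and `F' = u ≤ a + C F`, so the differential Gronwall inequality applies to `F`.
  have hF : ∀ t ∈ Icc 0 T, F t ≤ gronwallBound 0 C a t := by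
    simpa only [sub_zero] using le_gronwallBound_of_liminf_deriv_right_le
      hu.continuousOn_primitive
      (fun t ht _ hr => (hu.hasDerivWithinAt_primitive_Ici ht).liminf_right_slope_le hr)
      (by simp) (fun t ht => by linarith [h t (Ico_subset_Icc_self ht)])
  intro t ht
  calc u t ≤ a + C * F t := h t ht
    _ ≤ a + C * gronwallBound 0 C a t := by gcongr; exact hF t ht
    _ = a * exp (C * t) := add_mul_gronwallBound_zero C a t

theorem le_mul_exp_mul_of_le_add_mul_integral (hC : 0 ≤ C) (ha : 0 ≤ a)
    (hu : ContinuousOn u (Icc 0 T))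
    (h : ∀ t ∈ Icc 0 T, u t ≤ a + C * ∫ r in (0 : ℝ)..t, u r) :
    ∀ t ∈ Icc 0 T, u t ≤ a * exp (C * T) := fun t ht =>
  (le_mul_exp_of_le_add_mul_integral hC hu h t ht).trans (by gcongr; exact ht.2)

end Gronwall

theorem le_add_mul_integral_of_le_add_mul_integral_add {u v : ℝ → ℝ} {a L B T : ℝ}
    (hL : 0 ≤ L) (hB : 0 ≤ B) (hu : ContinuousOn u (Icc 0 T)) (hv : ContinuousOn v (Icc 0 T))
    (hvB : ∀ t ∈ Icc 0 T, v t ≤ B)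
    (h : ∀ t ∈ Icc 0 T, u t ≤ a + L * ∫ r in (0 : ℝ)..t, (u r + v r)) :
    ∀ t ∈ Icc 0 T, u t ≤ a + L * T * B + L * ∫ r in (0 : ℝ)..t, u r := by
  intro t ht
  have hv_int := hv.intervalIntegrable_of_mem_Icc ht
  have hv_le : ∫ r in (0 : ℝ)..t, v r ≤ T * B :=
    calc ∫ r in (0 : ℝ)..t, v r ≤ ∫ _ in (0 : ℝ)..t, B :=
          integral_mono_on ht.1 hv_int (intervalIntegrable_const (μ := volume))
            fun r hr => hvB r ⟨hr.1, hr.2.trans ht.2⟩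
      _ = t * B := by simp
      _ ≤ T * B := by gcongr; exact ht.2
  have hut := h t ht
  rw [integral_add (hu.intervalIntegrable_of_mem_Icc ht) hv_int] at hut
  linarith [mul_le_mul_of_nonneg_left hv_le hL]

theorem average_le_add_two_mul_integral_average {ι : Type*} [Fintype ι] [Nonempty ι]
    {u : ι → ℝ → ℝ} {α : ι → ℝ} {L t : ℝ} (hu : ∀ i, IntervalIntegrable (u i) volume 0 t)
    (h : ∀ i, u i t ≤ α i +
      L * ∫ r in (0 : ℝ)..t, (u i r + (Fintype.card ι : ℝ)⁻¹ * ∑ k, u k r)) :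
    (Fintype.card ι : ℝ)⁻¹ * ∑ k, u k t ≤ (Fintype.card ι : ℝ)⁻¹ * ∑ k, α k +
      2 * L * ∫ r in (0 : ℝ)..t, (Fintype.card ι : ℝ)⁻¹ * ∑ k, u k r := by
  set c : ℝ := (Fintype.card ι : ℝ)⁻¹
  set M : ℝ := ∫ r in (0 : ℝ)..t, c * ∑ k, u k r
  have hM_int : IntervalIntegrable (fun r => c * ∑ k, u k r) volume 0 t := by
    simpa only [Finset.sum_apply] using
      (IntervalIntegrable.sum Finset.univ fun k _ => hu k).const_mul c
  have hc : c * Fintype.card ι = 1 := inv_mul_cancel₀ (by positivity)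
  have hM : c * ∑ k, ∫ r in (0 : ℝ)..t, u k r = M := by
    rw [← integral_finsetSum fun k _ => hu k, ← intervalIntegral.integral_const_mul]
  calc c * ∑ k, u k t ≤ c * ∑ k, (α k + L * ((∫ r in (0 : ℝ)..t, u k r) + M)) := by
        gcongr with k
        rw [← integral_add (hu k) hM_int]
        exact h k
    _ = c * ∑ k, α k + L * (c * ∑ k, ∫ r in (0 : ℝ)..t, u k r) +
          c * Fintype.card ι * (L * M) := by
        simp only [mul_add, Finset.sum_add_distrib, ← Finset.mul_sum, Finset.sum_const,
          Finset.card_univ, nsmul_eq_mul]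
        ring
    _ = c * ∑ k, α k + 2 * L * M := by rw [hM, hc]; ring

theorem statement17_general (N : ℕ) (T L : ℝ) (hL : 0 ≤ L)
    (α : Fin N → ℝ) (hα : ∀ i, 0 ≤ α i)
    (u : Fin N → ℝ → ℝ)
    (hcont : ∀ i, ContinuousOn (u i) (Set.Icc 0 T))
    (hineq : ∀ i, ∀ t ∈ Set.Icc (0 : ℝ) T,
      u i t ≤ α i + L * ∫ r in (0 : ℝ)..t, (u i r + (N : ℝ)⁻¹ * ∑ k, u k r)) :
    ∀ i, ∀ t ∈ Set.Icc (0 : ℝ) T,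
      u i t ≤ Real.exp (L * T)
          * (α i + L * T * Real.exp (2 * L * T) * ((N : ℝ)⁻¹ * ∑ k, α k))
      ∧ u i t ≤ (1 + L * T * Real.exp (2 * L * T)) * Real.exp (L * T)
          * (α i + (N : ℝ)⁻¹ * ∑ k, α k) := by
  intro i t ht
  have : Nonempty (Fin N) := ⟨i⟩
  set abar : ℝ := (N : ℝ)⁻¹ * ∑ k, α k
  have habar : 0 ≤ abar := mul_nonneg (by positivity) (Finset.sum_nonneg fun k _ => hα k)
  have hT : 0 ≤ T := ht.1.trans ht.2
  have hm_cont : ContinuousOn (fun r => (N : ℝ)⁻¹ * ∑ k, u k r) (Icc 0 T) :=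
    continuousOn_const.mul (continuousOn_finsetSum _ fun k _ => hcont k)
  have hm : ∀ s ∈ Icc 0 T, (N : ℝ)⁻¹ * ∑ k, u k s ≤
      abar + 2 * L * ∫ r in (0 : ℝ)..s, (N : ℝ)⁻¹ * ∑ k, u k r := fun s hs => by
    simpa only [Fintype.card_fin] using average_le_add_two_mul_integral_average
      (fun k => (hcont k).intervalIntegrable_of_mem_Icc hs)
      (by simpa only [Fintype.card_fin] using fun k => hineq k s hs)
  have hm_le := le_mul_exp_mul_of_le_add_mul_integral (by positivity) habar hm_cont hm
  have hB : 0 ≤ abar * exp (2 * L * T) := mul_nonneg habar (exp_pos _).le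
  have hui := le_add_mul_integral_of_le_add_mul_integral_add hL hB (hcont i) hm_cont hm_le
    (hineq i)
  have hfirst := le_mul_exp_mul_of_le_add_mul_integral hL
    (add_nonneg (hα i) (mul_nonneg (by positivity) hB)) (hcont i) hui t ht
  have hsplit : α i + L * T * (abar * exp (2 * L * T)) ≤
      (1 + L * T * exp (2 * L * T)) * (α i + abar) := by
    nlinarith [mul_nonneg (by positivity : 0 ≤ L * T * exp (2 * L * T)) (hα i)]
  refine ⟨hfirst.trans_eq (by ring), hfirst.trans ?_⟩
  linarith [mul_le_mul_of_nonneg_right hsplit (exp_pos (L * T)).le]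

/-- a Gronwall-type estimate for `N` coupled integral inequalities whose
coupling is through the average `N⁻¹ ∑_k u^k`. -/
theorem statement17 (N : ℕ) (hN : 0 < N) (T L : ℝ) (hT : 0 ≤ T) (hL : 0 ≤ L)
    (α : Fin N → ℝ) (hα : ∀ i, 0 ≤ α i)
    (u : Fin N → ℝ → ℝ)
    (hcont : ∀ i, ContinuousOn (u i) (Set.Icc 0 T))
    (hnn : ∀ i, ∀ t ∈ Set.Icc (0 : ℝ) T, 0 ≤ u i t)
    (hineq : ∀ i, ∀ t ∈ Set.Icc (0 : ℝ) T,
      u i t ≤ α i + L * ∫ r in (0 : ℝ)..t, (u i r + (N : ℝ)⁻¹ * ∑ k, u k r)) :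
    ∀ i, ∀ t ∈ Set.Icc (0 : ℝ) T,
      u i t ≤ Real.exp (L * T)
          * (α i + L * T * Real.exp (2 * L * T) * ((N : ℝ)⁻¹ * ∑ k, α k))
      ∧ u i t ≤ (1 + L * T * Real.exp (2 * L * T)) * Real.exp (L * T)
          * (α i + (N : ℝ)⁻¹ * ∑ k, α k) :=
  statement17_general N T L hL α hα u hcont hineq
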